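/- arXiv:2305.04218 — 2 statements merged into one kernel-verified Lean document; each statement's English description precedes it below -/
import Mathlib

section
/- The map φ: {0,1}^ℕ → {0,1}^ℕ that swaps symbols 0 ↔ 1 in every coordinate is a shift-commuting involution, and it is the unique nontrivial automorphism of the one-sided 2-shift: every bijection of {0,1}^ℕ that is a homeomorphism commuting with the shift is either the identity or the symbol swap. -/
/-- The one-sided shift on `{0,1}^ℕ`. -/
def shift (x : ℕ → Bool) : ℕ → Bool := fun i => x (i + 1)

/-- The symbol swap `0 ↔ 1` in every coordinate. -/
def swap01 (x : ℕ → Bool) : ℕ → Bool := fun i => !(x i)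

namespace Stmt13

abbrev X : Type := ℕ → Bool

def cons (b : Bool) (t : X) : X := fun i => match i with
  | 0 => b
  | Nat.succ j => t j

def drop (k : ℕ) (x : X) : X := fun i => x (i + k)

@[simp] lemma cons_zero (b : Bool) (t : X) : cons b t 0 = b := rfl
@[simp] lemma cons_succ (b : Bool) (t : X) (j : ℕ) : cons b t (j+1) = t j := rfl
@[simp] lemma shift_cons (b : Bool) (t : X) : shift (cons b t) = t := funext fun _ => rfl
@[simp] lemma drop_zero (x : X) : drop 0 x = x := funext fun _ => rfl
lemma drop_apply (k : ℕ) (x : X) (i : ℕ) : drop k x i = x (i+k) := rfl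
lemma shift_drop (k : ℕ) (x : X) : shift (drop k x) = drop (k+1) x :=
  funext fun i => congrArg x (by omega)
lemma cons_head_tail (x : X) : cons (x 0) (shift x) = x := funext fun i => by
  cases i <;> rfl

lemma continuous_cons (b : Bool) : Continuous (cons b) := by
  refine continuous_pi fun i => ?_
  cases i with
  | zero => exact continuous_const
  | succ j => exact continuous_apply j

lemma exists_radius (g : X → Bool) (hg : Continuous g) :
    ∃ n, ∀ x y : X, (∀ i < n, x i = y i) → g x = g y := by
  classical
  set K : Set (X × X) := (fun p : X × X => xor (g p.1) (g p.2)) ⁻¹' {true} with hK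
  have hgc : Continuous fun p : X × X => xor (g p.1) (g p.2) := by
    have h1 : Continuous fun p : X × X => (g p.1, g p.2) :=
      (hg.comp continuous_fst).prodMk (hg.comp continuous_snd)
    exact (continuous_of_discreteTopology (f := fun q : Bool × Bool => xor q.1 q.2)).comp h1
  have hKc : IsCompact K := (IsClosed.preimage hgc (isClosed_discrete _)).isCompact
  have hcover : K ⊆ ⋃ i : ℕ, {p : X × X | p.1 i ≠ p.2 i} := by
    intro p hp
    have hne : p.1 ≠ p.2 := by
      intro he
      rw [hK] at hp
      simp only [Set.mem_preimage, Set.mem_singleton_iff, he] at hp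
      simp at hp
    have hex : ∃ i, p.1 i ≠ p.2 i := by
      by_contra hno
      push_neg at hno
      exact hne (funext hno)
    rcases hex with ⟨i, hi⟩
    exact Set.mem_iUnion.2 ⟨i, hi⟩
  have hopen : ∀ i : ℕ, IsOpen {p : X × X | p.1 i ≠ p.2 i} := by
    intro i
    have hc : Continuous fun p : X × X => xor (p.1 i) (p.2 i) := by
      have h1 : Continuous fun p : X × X => (p.1 i, p.2 i) :=
        ((continuous_apply i).comp continuous_fst).prodMk
          ((continuous_apply i).comp continuous_snd)
      exact (continuous_of_discreteTopology (f := fun q : Bool × Bool => xor q.1 q.2)).comp h1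
    have hset : {p : X × X | p.1 i ≠ p.2 i}
        = (fun p : X × X => xor (p.1 i) (p.2 i)) ⁻¹' {true} := by
      ext p
      cases h1 : p.1 i <;> cases h2 : p.2 i <;> simp [h1, h2]
    rw [hset]
    exact (isOpen_discrete _).preimage hc
  obtain ⟨F, hF⟩ := hKc.elim_finite_subcover _ hopen hcover
  refine ⟨F.sup id + 1, fun x y hxy => ?_⟩
  by_contra hne
  have hmem : (x, y) ∈ K := by
    rw [hK]
    simp only [Set.mem_preimage, Set.mem_singleton_iff]
    cases hgx : g x <;> cases hgy : g y <;> simp_all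
  rcases Set.mem_iUnion₂.1 (hF hmem) with ⟨i, hiF, hi⟩
  exact hi (hxy i (by have := Finset.le_sup (f := id) hiF; simp at this; omega))

/-- head of the image under a shift-commuting homeomorphism, at tail `t`, head `false`. -/
def E (H : X ≃ₜ X) : X → Bool := fun t => H (cons false t) 0

section
variable (H : X ≃ₜ X) (hc : ∀ x, H (shift x) = shift (H x))
include hc

lemma shift_H (x : X) : shift (H x) = H (shift x) := (hc x).symm

lemma head_flip (t : X) : H (cons true t) 0 = !(H (cons false t) 0) := by
  have h1 : shift (H (cons true t)) = H t := by rw [shift_H H hc, shift_cons]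
  have h2 : shift (H (cons false t)) = H t := by rw [shift_H H hc, shift_cons]
  have hne : H (cons true t) ≠ H (cons false t) := by
    intro he
    have h3 : cons true t = cons false t := H.injective he
    have h4 : (true : Bool) = false := congrFun h3 0
    exact Bool.noConfusion h4
  have hne0 : H (cons true t) 0 ≠ H (cons false t) 0 := by
    intro he0
    apply hne
    rw [← cons_head_tail (H (cons true t)), ← cons_head_tail (H (cons false t)), h1, h2, he0]
  cases hb : H (cons false t) 0 <;> cases hb' : H (cons true t) 0 <;> simp_all

lemma head_formula (x : X) : H x 0 = xor (x 0) (E H (shift x)) := by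
  have hx := cons_head_tail x
  cases hx0 : x 0 with
  | false =>
    rw [hx0] at hx
    calc H x 0 = H (cons false (shift x)) 0 := by rw [hx]
    _ = E H (shift x) := rfl
    _ = xor false (E H (shift x)) := by simp
  | true =>
    rw [hx0] at hx
    calc H x 0 = H (cons true (shift x)) 0 := by rw [hx]
    _ = !(H (cons false (shift x)) 0) := head_flip H hc _
    _ = xor true (E H (shift x)) := by simp [E]

lemma H_drop (k : ℕ) (x : X) : drop k (H x) = H (drop k x) := by
  induction k with
  | zero => simp
  | succ k ih =>
    rw [← shift_drop, ih, ← shift_drop, shift_H H hc]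

lemma coord_formula (x : X) (j : ℕ) : H x j = xor (x j) (E H (drop (j+1) x)) := by
  have h1 : H x j = (drop j (H x)) 0 := by rw [drop_apply]; exact congrArg (H x) (by omega)
  rw [h1, H_drop H hc, head_formula H hc, shift_drop]
  have h2 : drop j x 0 = x j := by rw [drop_apply]; exact congrArg x (by omega)
  rw [h2]

omit hc in
lemma E_continuous : Continuous (E H) :=
  (continuous_apply 0).comp (H.continuous.comp (continuous_cons false))

lemma master (hc' : ∀ x, H.symm (shift x) = shift (H.symm x)) (t : X) :
    E H t = E H.symm (H t) := by
  have h0 : H.symm (H (cons false t)) 0 = false := by rw [H.symm_apply_apply]; rfl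
  rw [head_formula H.symm hc'] at h0
  have hsh : shift (H (cons false t)) = H t := by rw [shift_H H hc, shift_cons]
  rw [hsh] at h0
  have he : H (cons false t) 0 = E H t := rfl
  rw [he] at h0
  cases hA : E H t <;> cases hB : E H.symm (H t) <;> simp_all

end

def seqAux (B : X) (f : ℕ → X → Bool) : ℕ → X
  | 0 => B
  | k+1 => cons (f k (seqAux B f k)) (seqAux B f k)

lemma seqAux_succ (B : X) (f : ℕ → X → Bool) (k : ℕ) :
    seqAux B f (k+1) = cons (f k (seqAux B f k)) (seqAux B f k) := rfl

lemma seqAux_add (B : X) (f : ℕ → X → Bool) : ∀ k j, seqAux B f k (j + k) = B j := by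
  intro k
  induction k with
  | zero => intro j; rfl
  | succ k ih =>
    intro j
    show cons _ _ (j + (k+1)) = B j
    have h : j + (k+1) = (j + k) + 1 := rfl
    rw [h]
    exact ih j

lemma drop_seqAux (B : X) (f : ℕ → X → Bool) :
    ∀ j k, drop j (seqAux B f (j + k)) = seqAux B f k := by
  intro j
  induction j with
  | zero =>
    intro k
    have h0 : (0:ℕ) + k = k := by omega
    rw [h0]
    exact funext fun _ => rfl
  | succ j ih =>
    intro k
    have h1 : (j+1) + k = (j + k) + 1 := by omega
    rw [h1, seqAux_succ]
    have h2 : drop (j+1) (cons (f (j+k) (seqAux B f (j+k))) (seqAux B f (j+k)))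
        = drop j (seqAux B f (j+k)) := funext fun i => rfl
    rw [h2]
    exact ih k

lemma exists_crit (g : X → Bool) (n : ℕ)
    (hDn : ∀ x y : X, (∀ i < n, x i = y i) → g x = g y)
    (hnot : ¬ ∀ x y : X, (∀ i < n - 1, x i = y i) → g x = g y) :
    ∃ z : X, g (Function.update z (n-1) false) ≠ g (Function.update z (n-1) true) := by
  push_neg at hnot
  obtain ⟨x, y, hagree, hne⟩ := hnot
  refine ⟨x, ?_⟩
  have h1 : g (Function.update x (n-1) (x (n-1))) = g x := by rw [Function.update_eq_self]
  have h2 : g (Function.update x (n-1) (y (n-1))) = g y := by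
    apply hDn
    intro i hi
    rcases Nat.lt_or_ge i (n-1) with h | h
    · rw [Function.update_of_ne (by omega)]
      exact hagree i h
    · have hi' : i = n-1 := by omega
      subst hi'
      rw [Function.update_self]
  by_cases hb : x (n-1) = y (n-1)
  · exfalso
    apply hne
    rw [← h1, hb, h2]
  · cases hx : x (n-1) <;> cases hy : y (n-1) <;> simp_all
    exact fun h => hne h.symm

/-- base sequence for the critical-point construction -/
def Bz (N : ℕ) (z : X) : X := fun i => match i with
  | 0 => false
  | Nat.succ j => if j < N then z j else false

/-- the critical point `t` -/
def tpt (h : X ≃ₜ X) (N M : ℕ) (z w : X) : X :=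
  seqAux (Bz N z) (fun k xs => xor (w (M-2-k)) (E h xs)) (M-1)

lemma tpt_top (h : X ≃ₜ X) (N M : ℕ) (z w : X) (hM : 0 < M) (j : ℕ) :
    tpt h N M z w (j + M) = if j < N then z j else false := by
  have h1 := seqAux_add (Bz N z) (fun k xs => xor (w (M-2-k)) (E h xs)) (M-1) (j+1)
  have h2 : (j+1) + (M-1) = j + M := by omega
  rw [h2] at h1
  exact h1

lemma tpt_low (h : X ≃ₜ X) (N M : ℕ) (z w : X) (j : ℕ) (hj : j < M - 1) :
    tpt h N M z w j = xor (w j) (E h (drop (j+1) (tpt h N M z w))) := by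
  set f : ℕ → X → Bool := fun k xs => xor (w (M-2-k)) (E h xs) with hf
  have hd1 : drop (j+1) (tpt h N M z w) = seqAux (Bz N z) f (M-2-j) := by
    have := drop_seqAux (Bz N z) f (j+1) (M-2-j)
    have he : (j+1) + (M-2-j) = M-1 := by omega
    rw [he] at this
    exact this
  have hd0 : tpt h N M z w j = seqAux (Bz N z) f (M-1-j) 0 := by
    have hds := drop_seqAux (Bz N z) f j (M-1-j)
    have he : j + (M-1-j) = M-1 := by omega
    rw [he] at hds
    show seqAux (Bz N z) f (M-1) j = seqAux (Bz N z) f (M-1-j) 0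
    rw [← hds, drop_apply]
    exact congrArg _ (by omega)
  have he2 : M-1-j = (M-2-j)+1 := by omega
  rw [hd0, he2, seqAux_succ, cons_zero, hd1]
  have he3 : M-2-(M-2-j) = j := by omega
  show xor (w (M-2-(M-2-j))) _ = _
  rw [he3]

end Stmt13

open Stmt13 in
/-- The symbol swap is a continuous shift-commuting involution of `{0,1}^ℕ`, distinct from
the identity, and it is the unique nontrivial automorphism of the one-sided 2-shift:
every self-homeomorphism of `{0,1}^ℕ` commuting with the shift is the identity or the
symbol swap. -/
theorem stmt13 :
    Continuous swap01 ∧ swap01 ∘ swap01 = id ∧ shift ∘ swap01 = swap01 ∘ shift ∧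
    swap01 ≠ id ∧
    ∀ h : (ℕ → Bool) ≃ₜ (ℕ → Bool), (⇑h ∘ shift = shift ∘ ⇑h) →
      ⇑h = id ∨ ⇑h = swap01 := by
  refine ⟨?_, ?_, ?_, ?_, ?_⟩
  · refine continuous_pi fun i => ?_
    exact (continuous_of_discreteTopology (f := fun b : Bool => !b)).comp (continuous_apply i)
  · funext x
    funext i
    simp [swap01, Function.comp]
  · funext x
    rfl
  · intro hcon
    have h0 := congrFun (congrFun hcon (fun _ => false)) 0
    simp [swap01] at h0
  · intro h hcomm
    classical
    have hc : ∀ x, h (shift x) = shift (h x) := fun x => congrFun hcomm x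
    have hc' : ∀ x, h.symm (shift x) = shift (h.symm x) := by
      intro x
      have h1 := hc (h.symm x)
      rw [h.apply_symm_apply] at h1
      have h2 := congrArg h.symm h1
      rw [h.symm_apply_apply] at h2
      exact h2.symm
    have hexN : ∃ n, ∀ x y : X, (∀ i < n, x i = y i) → E h x = E h y :=
      exists_radius _ (E_continuous h)
    have hexM : ∃ n, ∀ x y : X, (∀ i < n, x i = y i) → E h.symm x = E h.symm y :=
      exists_radius _ (E_continuous h.symm)
    set N := Nat.find hexN with hNdef
    set M := Nat.find hexM with hMdef
    have hDN : ∀ x y : X, (∀ i < N, x i = y i) → E h x = E h y := Nat.find_spec hexN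
    have hDM : ∀ x y : X, (∀ i < M, x i = y i) → E h.symm x = E h.symm y := Nat.find_spec hexM
    by_cases hN0 : N = 0
    · -- E h is constant; h is id or swap01
      have hconst : ∀ x y : X, E h x = E h y := fun x y =>
        hDN x y (fun i hi => absurd hi (by omega))
      cases hcval : E h (fun _ => false) with
      | false =>
        left
        funext x
        funext j
        show h x j = x j
        rw [coord_formula h hc, hconst (drop (j+1) x) (fun _ => false), hcval]
        simp
      | true =>
        right
        funext x
        funext j
        show h x j = !(x j)
        rw [coord_formula h hc, hconst (drop (j+1) x) (fun _ => false), hcval]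
        simp
    · exfalso
      have hN : 0 < N := Nat.pos_of_ne_zero hN0
      have hM : 0 < M := by
        rcases Nat.eq_zero_or_pos M with hM0 | hMp
        · exfalso
          have hconst' : ∀ x y : X, E h.symm x = E h.symm y := fun x y =>
            hDM x y (fun i hi => absurd hi (by omega))
          have hP0 : ∀ x y : X, (∀ i < 0, x i = y i) → E h x = E h y := by
            intro x y _
            rw [master h hc hc' x, master h hc hc' y]
            exact hconst' _ _
          have hle : N ≤ 0 := Nat.find_le hP0
          omega
        · exact hMp
      have hnotN : ¬ ∀ x y : X, (∀ i < N - 1, x i = y i) → E h x = E h y :=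
        Nat.find_min hexN (by omega)
      obtain ⟨z, hz⟩ := exists_crit (E h) N hDN hnotN
      have hnotM : ¬ ∀ x y : X, (∀ i < M - 1, x i = y i) → E h.symm x = E h.symm y :=
        Nat.find_min hexM (by omega)
      obtain ⟨w, hw⟩ := exists_crit (E h.symm) M hDM hnotM
      set t : X := tpt h N M z w with htdef
      set t' : X := Function.update t (M+N-1) (!(t (M+N-1))) with ht'def
      have htop : ∀ j, j < N → t (j + M) = z j := by
        intro j hj
        rw [htdef, tpt_top h N M z w hM]
        simp [hj]
      have htMN : t (M+N-1) = z (N-1) := by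
        have h1 := htop (N-1) (by omega)
        have h2 : (N-1) + M = M+N-1 := by omega
        rw [h2] at h1
        exact h1
      -- low coordinates of h t are w
      have hlow : ∀ j, j < M-1 → h t j = w j := by
        intro j hj
        rw [coord_formula h hc, htdef, tpt_low h N M z w j hj]
        rw [← htdef]
        cases hW : w j <;> cases hE : E h (drop (j+1) t) <;> simp [hW, hE]
      -- E h on the shifted tails
      have hdm : E h (drop M t) = E h z := by
        apply hDN
        intro i hi
        rw [drop_apply]
        exact htop i hi
      have hupdc : Function.update z (N-1) (z (N-1)) = z := Function.update_eq_self _ _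
      have hdm' : E h (drop M t') = E h (Function.update z (N-1) (!(z (N-1)))) := by
        apply hDN
        intro i hi
        rw [drop_apply]
        by_cases hiN : i = N-1
        · subst hiN
          have h2 : (N-1) + M = M+N-1 := by omega
          rw [h2, ht'def, Function.update_self, Function.update_self, htMN]
        · rw [ht'def, Function.update_of_ne (by omega), Function.update_of_ne hiN]
          exact htop i hi
      have hflip : E h (drop M t') = !(E h (drop M t)) := by
        rw [hdm, hdm']
        conv_rhs => rw [← hupdc]
        have key1 : ∀ a b : Bool, a ≠ b → b = !a := by decide
        have key2 : ∀ a b : Bool, a ≠ b → a = !b := by decide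
        cases hzv : z (N-1)
        · simp only [Bool.not_false]
          exact key1 _ _ hz
        · simp only [Bool.not_true]
          exact key2 _ _ hz
      -- low coords of h t' agree with h t
      have hlow' : ∀ j, j < M-1 → h t' j = h t j := by
        intro j hj
        rw [coord_formula h hc t' j, coord_formula h hc t j]
        have h1 : t' j = t j := by
          rw [ht'def]; exact Function.update_of_ne (by omega) _ _
        have h2 : E h (drop (j+1) t') = E h (drop (j+1) t) := by
          apply hDN
          intro i hi
          rw [drop_apply, drop_apply, ht'def]
          exact Function.update_of_ne (by omega) _ _
        rw [h1, h2]
      have hm1 : h t' (M-1) = !(h t (M-1)) := by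
        rw [coord_formula h hc t' (M-1), coord_formula h hc t (M-1)]
        have h1 : t' (M-1) = t (M-1) := by
          rw [ht'def]; exact Function.update_of_ne (by omega) _ _
        have h2 : (M-1)+1 = M := by omega
        rw [h1, h2, hflip]
        cases hA : t (M-1) <;> cases hB : E h (drop M t) <;> simp [hA, hB]
      -- relate E h.symm values to updates of w
      have hup : E h.symm (h t) = E h.symm (Function.update w (M-1) (h t (M-1))) := by
        apply hDM
        intro j hj
        by_cases hjm : j = M-1
        · subst hjm
          rw [Function.update_self]
        · rw [Function.update_of_ne hjm]
          exact hlow j (by omega)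
      have hup' : E h.symm (h t') = E h.symm (Function.update w (M-1) (!(h t (M-1)))) := by
        apply hDM
        intro j hj
        by_cases hjm : j = M-1
        · subst hjm
          rw [Function.update_self]
          exact hm1
        · rw [Function.update_of_ne hjm, hlow' j (by omega)]
          exact hlow j (by omega)
      have het : E h t' = E h t := by
        apply hDN
        intro i hi
        rw [ht'def]
        exact Function.update_of_ne (by omega) _ _
      have hmt := master h hc hc' t
      have hmt' := master h hc hc' t'
      rw [hup] at hmt
      rw [hup', het] at hmt'
      have hcontra : E h.symm (Function.update w (M-1) (h t (M-1)))
          = E h.symm (Function.update w (M-1) (!(h t (M-1)))) := by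
        rw [← hmt, ← hmt']
      cases hA : h t (M-1) <;> rw [hA] at hcontra <;>
        simp only [Bool.not_false, Bool.not_true] at hcontra
      · exact hw hcontra
      · exact hw hcontra.symm
end

section
/- Let α be periodic under doubling with repeating kneading word v of length m−1 (period m), and let s ∈ {0,1}^ℕ be a sequence of the form s = w t_1 v t_2 v t_3 v … where w ∈ {0,1}^* does not end in 0v or 1v (w is α-regular) and t_i ∈ {0,1}. Then this decomposition (w and the sequence (t_i)) is unique unless the tail (t_i v)_{i} is eventually constant equal to 0v repeated or 1v repeated in a way overlapping with a shift of v; in particular, if v is not a power of a shorter word and s does not end in the periodic sequence (0v)^∞ or (1v)^∞, the decomposition is unique. -/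
/-- The substitution `0 ↦ 0v`, `1 ↦ 1v`: sends `t_1 t_2 t_3 …` to `t_1 v t_2 v t_3 v …`. -/
def psiSub (v : List Bool) (t : ℕ → Bool) : ℕ → Bool := fun n =>
  if n % (v.length + 1) = 0 then t (n / (v.length + 1))
  else v.getD (n % (v.length + 1) - 1) false

/-- Prepend a finite word `w` to an infinite sequence `x`. -/
def catSeq (w : List Bool) (x : ℕ → Bool) : ℕ → Bool := fun n =>
  if n < w.length then w.getD n false else x (n - w.length)

/-- `w` is `α`-regular (with kneading repetition word `v`): it does not end with `0v`
nor with `1v`. -/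
def RegularWord (v w : List Bool) : Prop :=
  ¬ ((false :: v) <:+ w) ∧ ¬ ((true :: v) <:+ w)

/-- `n`-fold repetition of a word. -/
def repWordB : ℕ → List Bool → List Bool
  | 0, _ => []
  | n + 1, w => w ++ repWordB n w

lemma key (v : List Bool) (s : ℕ → Bool)
    (hs : ∀ (N : ℕ) (b : Bool), ¬ ∀ n : ℕ, s (N + n) = (b :: v).getD (n % (v.length + 1)) false)
    (w₁ w₂ : List Bool) (t₁ t₂ : ℕ → Bool)
    (h₂ : RegularWord v w₂)
    (e₁ : s = catSeq w₁ (psiSub v t₁)) (e₂ : s = catSeq w₂ (psiSub v t₂))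
    (hlt : w₁.length < w₂.length) : False := by
  set m := v.length + 1 with hm
  set L₁ := w₁.length with hL₁
  set L₂ := w₂.length with hL₂
  set d := L₂ - L₁ with hd
  have hd0 : 0 < d := by omega
  have f₁ : ∀ n, s (L₁ + n) = psiSub v t₁ n := by
    intro n
    rw [e₁]
    unfold catSeq
    rw [if_neg (by omega)]
    congr 1
    omega
  have f₂ : ∀ n, s (L₂ + n) = psiSub v t₂ n := by
    intro n
    rw [e₂]
    unfold catSeq
    rw [if_neg (by omega)]
    congr 1
    omega
  set r := d % m with hr
  by_cases hr0 : r = 0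
  · -- d is a multiple of m; w₂ ends with (t₁ (d/m - 1)) :: v
    obtain ⟨q, hdm⟩ : ∃ q, d = m * q := Nat.dvd_of_mod_eq_zero hr0
    obtain ⟨p, rfl⟩ : ∃ p, q = p + 1 := by
      rcases Nat.eq_zero_or_pos q with h | h
      · subst h; simp at hdm; omega
      · exact ⟨q - 1, by omega⟩
    have hdm' : d = m * p + m := by rw [hdm]; ring
    have hmL₂ : m ≤ L₂ := by omega
    set b := t₁ p with hb
    have hdrop : w₂.drop (L₂ - m) = b :: v := by
      apply List.ext_getElem
      · simp [hm]; omega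
      · intro i h1 h2
        rw [List.getElem_drop]
        have hiL : L₂ - m + i < L₂ := by
          simp at h1; omega
        have him : i < m := by
          simp [hm] at h2; omega
        have hsw : s (L₂ - m + i) = w₂[L₂ - m + i] := by
          rw [e₂]
          unfold catSeq
          rw [if_pos hiL, List.getD_eq_getElem _ _ hiL]
        have hsplit : L₂ - m + i = L₁ + (m * p + i) := by omega
        have hpsi : s (L₂ - m + i) = psiSub v t₁ (m * p + i) := by
          rw [hsplit]; exact f₁ _
        rw [← hsw, hpsi]
        unfold psiSub
        rw [← hm]
        have hmod : (m * p + i) % m = i := by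
          rw [Nat.mul_add_mod, Nat.mod_eq_of_lt him]
        rcases Nat.eq_zero_or_pos i with hi0 | hipos
        · subst hi0
          rw [if_pos (by rw [hmod])]
          have : (m * p + 0) / m = p := by
            simp [Nat.mul_div_cancel_left _ (by omega : 0 < m)]
          rw [this]
          simp [b]
        · rw [if_neg (by rw [hmod]; omega), hmod]
          have hiv : i - 1 < v.length := by omega
          rw [List.getD_eq_getElem _ _ hiv]
          rcases i with _ | j
          · omega
          · simp
    have hsuf : (b :: v) <:+ w₂ := ⟨w₂.take (L₂ - m), by rw [← hdrop, List.take_append_drop]⟩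
    cases hb' : b
    · exact h₂.1 (hb' ▸ hsuf)
    · exact h₂.2 (hb' ▸ hsuf)
  · -- r ≠ 0: tail is periodic, contradicting hs
    have hrm : r < m := Nat.mod_lt _ (by omega)
    set b := v.getD (r - 1) false with hb
    refine hs L₂ b ?_
    intro n
    rw [f₂ n]
    unfold psiSub
    rw [← hm]
    rcases Nat.eq_zero_or_pos (n % m) with hn0 | hnp
    · rw [if_pos hn0]
      rw [hn0, List.getD_cons_zero]
      -- t₂ (n/m) = b
      have h1 : s (L₂ + n) = psiSub v t₂ n := f₂ n
      have h2 : s (L₂ + n) = psiSub v t₁ (n + d) := by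
        have : L₂ + n = L₁ + (n + d) := by omega
        rw [this]; exact f₁ _
      have hmod : (n + d) % m = r := by
        obtain ⟨k, rfl⟩ := Nat.dvd_of_mod_eq_zero hn0
        rw [Nat.mul_add_mod, ← hr]
      have h3 : psiSub v t₂ n = psiSub v t₁ (n + d) := by rw [← h1, h2]
      unfold psiSub at h3
      rw [← hm] at h3
      rw [if_pos hn0, if_neg (by rw [hmod]; omega), hmod] at h3
      exact h3
    · rw [if_neg (by omega)]
      rcases hnm : n % m with _ | j
      · omega
      · simp

/-- Uniqueness of the decomposition `s = w t_1 v t_2 v t_3 v …` with `w` an `α`-regular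
word: if `v` is not a power of a shorter word and `s` does not end in the periodic tail
`(0v)^∞` or `(1v)^∞`, then the prefix `w` and the symbol sequence `(t_i)` are unique. -/
theorem stmt18 (v : List Bool)
    (hprim : ¬ ∃ (u : List Bool) (k : ℕ), u.length < v.length ∧ 2 ≤ k ∧ repWordB k u = v)
    (s : ℕ → Bool)
    (hs : ∀ (N : ℕ) (b : Bool), ¬ ∀ n : ℕ, s (N + n) = (b :: v).getD (n % (v.length + 1)) false)
    (w₁ w₂ : List Bool) (t₁ t₂ : ℕ → Bool)
    (h₁ : RegularWord v w₁) (h₂ : RegularWord v w₂)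
    (e₁ : s = catSeq w₁ (psiSub v t₁)) (e₂ : s = catSeq w₂ (psiSub v t₂)) :
    w₁ = w₂ ∧ t₁ = t₂ := by
  have hlen : w₁.length = w₂.length := by
    rcases lt_trichotomy w₁.length w₂.length with h | h | h
    · exact absurd (key v s hs w₁ w₂ t₁ t₂ h₂ e₁ e₂ h) (by simp)
    · exact h
    · exact absurd (key v s hs w₂ w₁ t₂ t₁ h₁ e₂ e₁ h) (by simp)
  have hw : w₁ = w₂ := by
    apply List.ext_getElem hlen
    intro i hi1 hi2
    have a1 : s i = w₁[i] := by
      rw [e₁]; unfold catSeq; rw [if_pos hi1, List.getD_eq_getElem _ _ hi1]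
    have a2 : s i = w₂[i] := by
      rw [e₂]; unfold catSeq; rw [if_pos hi2, List.getD_eq_getElem _ _ hi2]
    rw [← a1, ← a2]
  refine ⟨hw, ?_⟩
  funext k
  set m := v.length + 1 with hm
  have f₁ : s (w₁.length + k * m) = psiSub v t₁ (k * m) := by
    rw [e₁]; unfold catSeq; rw [if_neg (by omega)]; congr 1; omega
  have f₂ : s (w₂.length + k * m) = psiSub v t₂ (k * m) := by
    rw [e₂]; unfold catSeq; rw [if_neg (by omega)]; congr 1; omega
  have hmod : k * m % m = 0 := by simp
  have hdiv : k * m / m = k := Nat.mul_div_cancel _ (by omega)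
  have h3 : psiSub v t₁ (k * m) = psiSub v t₂ (k * m) := by
    rw [← f₁, ← f₂, hlen]
  unfold psiSub at h3
  rw [← hm, if_pos hmod, if_pos hmod, hdiv] at h3
  exact h3
end
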